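/- arXiv:1609.02765 — 5 statements merged into one kernel-verified Lean document; each statement's English description precedes it below -/
import Mathlib

section
/- Let R be a polynomial ring over a field K equipped with a monomial order, and let h_1, ..., h_n be nonzero polynomials in R whose leading terms are pairwise coprime (i.e., gcd(Lt(h_i), Lt(h_j)) = 1 for all i ≠ j). Then h_1, ..., h_n is a regular sequence in R. -/
/-!
Pairwise coprime leading monomials make the `h i` a Gröbner basis of the ideal `I` they
generate. Take a representation `p = ∑ cᵢ hᵢ` whose top-degree terms cancel. Then there are two
top terms `cᵢ hᵢ` and `cⱼ hⱼ`, coprimality gives `lm(hⱼ) ∣ lm(cᵢ)`, and adding a multiple of the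
Koszul syzygy `hᵢ eⱼ - hⱼ eᵢ` lowers `cᵢ hᵢ` without raising any other term. So the leading
monomial of every nonzero element of `I` is divisible by some `lm(hᵢ)`.

Now let `b g ∈ I`, where `lm(b)` is coprime to every `lm(hᵢ)`. The remainder `r` of `g` on
division by the `hᵢ` also satisfies `b r ∈ I`. If `r ≠ 0`, some `lm(hᵢ)` divides
`lm(b) lm(r)`, hence divides `lm(r)`, and that is impossible for a remainder. So `r = 0` and
`g ∈ I`.
-/

noncomputable def MonomialOrder.degOf {σ : Type*} (m : MonomialOrder σ) {K : Type*} [Field K]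
    (f : MvPolynomial σ K) : σ →₀ ℕ :=
  m.toSyn.symm (f.support.sup fun d => m.toSyn d)

noncomputable def MonomialOrder.leadingTermOf {σ : Type*} (m : MonomialOrder σ) {K : Type*}
    [Field K] (f : MvPolynomial σ K) : MvPolynomial σ K :=
  MvPolynomial.monomial (m.degOf f) (f.coeff (m.degOf f))

open MvPolynomial Finset

theorem Finsupp.le_of_le_add_of_inf_eq_zero {σ : Type*} {a b c : σ →₀ ℕ} (h : a ⊓ b = 0)
    (hle : a ≤ b + c) : a ≤ c := by
  intro x
  have hx := DFunLike.congr_fun h x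
  have := hle x
  simp only [Finsupp.inf_apply, Finsupp.coe_zero, Pi.zero_apply, Finsupp.add_apply] at hx this
  omega

theorem RingTheory.Sequence.isWeaklyRegular_ofFn_iff {R : Type*} [CommRing R] {n : ℕ}
    (v : Fin n → R) :
    IsWeaklyRegular R (List.ofFn v) ↔ ∀ (k : ℕ) (hk : k < n) (x : R),
      v ⟨k, hk⟩ * x ∈ Ideal.span (Set.range (Fin.take k hk.le v)) →
        x ∈ Ideal.span (Set.range (Fin.take k hk.le v)) := by
  have hspan : ∀ (k : ℕ) (hk : k < n),
      (Ideal.ofList ((List.ofFn v).take k) • ⊤ : Submodule R R) =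
        Ideal.span (Set.range (Fin.take k hk.le v)) := by
    intro k hk
    rw [← Fin.ofFn_take_eq_take_ofFn hk.le, Ideal.smul_eq_mul, Ideal.mul_top]
    exact congrArg Ideal.span (Set.ext fun _ ↦ List.mem_ofFn)
  simp only [isWeaklyRegular_iff, List.length_ofFn, List.getElem_ofFn]
  refine forall₂_congr fun k hk ↦ ?_
  rw [isSMulRegular_quotient_iff_mem_of_smul_mem, hspan k hk]
  rfl

namespace MonomialOrder

open scoped MonomialOrder

variable {σ : Type*} {m : MonomialOrder σ} {ι : Type*} [Fintype ι]

theorem leadingTermOf_eq_leadingTerm {K : Type*} [Field K] (f : MvPolynomial σ K) :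
    m.leadingTermOf f = m.leadingTerm f :=
  rfl

section CommSemiring

variable {R : Type*} [CommSemiring R]

theorem degree_inf_eq_zero_of_isRelPrime [Nontrivial R] {f g : MvPolynomial σ R}
    (h : IsRelPrime (m.leadingTerm f) (m.leadingTerm g)) : m.degree f ⊓ m.degree g = 0 := by
  ext x
  by_contra hx
  simp only [Finsupp.inf_apply, Finsupp.coe_zero, Pi.zero_apply, Nat.min_eq_zero_iff,
    not_or] at hx
  have hX : IsUnit (X x : MvPolynomial σ R) :=
    h (X_dvd_monomial.mpr (Or.inr hx.1)) (X_dvd_monomial.mpr (Or.inr hx.2))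
  simpa using hX.map (constantCoeff (R := R) (σ := σ))

theorem exists_ne_toSyn_degree_eq_of_toSyn_degree_sum_lt {g : ι → MvPolynomial σ R}
    {δ : m.syn} (hg : ∀ k, m.toSyn (m.degree (g k)) ≤ δ)
    (hsum : m.toSyn (m.degree (∑ k, g k)) < δ) {i : ι} (hi : m.toSyn (m.degree (g i)) = δ) :
    ∃ j ≠ i, m.toSyn (m.degree (g j)) = δ := by
  by_contra! hlt
  have hgi : g i ≠ 0 := by
    rintro hgi
    rw [hgi, degree_zero, map_zero] at hi
    exact not_lt_bot (hi ▸ hsum)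
  have hcoeff : (∑ k, g k).coeff (m.degree (g i)) = (g i).coeff (m.degree (g i)) := by
    rw [coeff_sum, Finset.sum_eq_single i (fun j _ hji ↦ ?_) (by simp)]
    exact coeff_eq_zero_of_lt (hi ▸ lt_of_le_of_ne (hg j) (hlt j hji))
  have hmem : m.degree (g i) ∈ (∑ k, g k).support := by
    rw [mem_support_iff, hcoeff]
    exact coeff_degree_ne_zero_iff.mpr hgi
  exact (le_degree hmem).not_gt (hi ▸ hsum)

end CommSemiring

theorem degree_sub_lt_of_leadingTerm_eq {R : Type*} [CommRing R] {p q : MvPolynomial σ R}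
    (h : m.leadingTerm p = m.leadingTerm q) (hp : m.degree p ≠ 0) :
    m.degree (p - q) ≺[m] m.degree p := by
  have hq : m.degree q = m.degree p := by rw [← degree_leadingTerm q, ← h, degree_leadingTerm]
  rw [show p - q = (p - m.leadingTerm p) - (q - m.leadingTerm q) by rw [h]; ring]
  refine degree_sub_le.trans_lt (max_lt (degree_sub_leadingTerm_lt_degree hp) ?_)
  exact hq ▸ degree_sub_leadingTerm_lt_degree (hq ▸ hp)

variable {K : Type*} [Field K]

theorem exists_sum_mul_eq_of_degree_mul_eq {f c : ι → MvPolynomial σ K} {i j : ι} (hij : i ≠ j)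
    (hcop : m.degree (f j) ⊓ m.degree (f i) = 0)
    (hdeg : m.degree (c i * f i) = m.degree (c j * f j)) (hd : m.degree (c i * f i) ≠ 0) :
    ∃ c' : ι → MvPolynomial σ K, ∑ k, c' k * f k = ∑ k, c k * f k ∧
      m.degree (c' i * f i) ≺[m] m.degree (c i * f i) ∧
      m.degree (c' j * f j) ≼[m] m.degree (c j * f j) ∧ ∀ k, k ≠ i → k ≠ j → c' k = c k := by
  classical
  obtain ⟨hci, hfi⟩ := mul_ne_zero_iff.mp (ne_zero_of_degree_ne_zero hd)
  obtain ⟨hcj, hfj⟩ := mul_ne_zero_iff.mp (ne_zero_of_degree_ne_zero (hdeg ▸ hd))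
  rw [degree_mul hci hfi, degree_mul hcj hfj] at hdeg
  have hdvd : m.degree (f j) ≤ m.degree (c i) :=
    Finsupp.le_of_le_add_of_inf_eq_zero hcop (by rw [add_comm, hdeg]; exact le_add_self)
  -- `u * lt(f j) = lt(c i)`, so adding `u` times the Koszul syzygy `f i • e j - f j • e i`
  -- to `c` cancels the top term of `c i * f i`.
  set u := monomial (m.degree (c i) - m.degree (f j))
    (m.leadingCoeff (c i) / m.leadingCoeff (f j))
  have hu : u ≠ 0 := by
    simp [u, monomial_eq_zero, div_eq_zero_iff, leadingCoeff_eq_zero_iff, hci, hfj]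
  have hdeg_u : m.degree (u * (f i * f j)) = m.degree (c i * f i) := by
    rw [degree_mul hu (mul_ne_zero hfi hfj), degree_mul hfi hfj, degree_mul hci hfi,
      degree_monomial, if_neg (by simpa [u] using hu), add_comm (m.degree (f i)), ← add_assoc,
      tsub_add_cancel_of_le hdvd]
  have hlc_u : m.leadingCoeff (u * (f i * f j)) = m.leadingCoeff (c i * f i) := by
    rw [leadingCoeff_mul, leadingCoeff_mul, leadingCoeff_mul, leadingCoeff_monomial]
    field_simp [leadingCoeff_ne_zero_iff.mpr hfj]
  set c' : ι → MvPolynomial σ K := c + Pi.single j (u * f i) - Pi.single i (u * f j)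
  have hc'i : c' i * f i = c i * f i - u * (f i * f j) := by
    simp only [c', Pi.sub_apply, Pi.add_apply, Pi.single_eq_same, Pi.single_eq_of_ne hij, add_zero]
    ring
  have hc'j : c' j * f j = c j * f j + u * (f i * f j) := by
    simp only [c', Pi.sub_apply, Pi.add_apply, Pi.single_eq_same, Pi.single_eq_of_ne hij.symm,
      sub_zero]
    ring
  refine ⟨c', ?_, ?_, ?_, fun k hki hkj ↦ by simp [c', hki, hkj]⟩
  · simp only [c', Pi.add_apply, Pi.sub_apply, add_mul, sub_mul, sum_add_distrib,
      sum_sub_distrib, Pi.single_apply, ite_mul, zero_mul, sum_ite_eq', mem_univ, if_true]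
    ring
  · rw [hc'i]
    exact degree_sub_lt_of_leadingTerm_eq (by rw [leadingTerm, leadingTerm, hdeg_u, hlc_u]) hd
  · rw [hc'j]
    refine degree_add_le.trans (sup_le le_rfl ?_)
    rw [hdeg_u, degree_mul hci hfi, degree_mul hcj hfj, hdeg]

theorem exists_sum_mul_eq_of_toSyn_degree_sum_lt {f : ι → MvPolynomial σ K}
    (hcop : Pairwise fun i j ↦ m.degree (f i) ⊓ m.degree (f j) = 0) {δ : m.syn}
    (c : ι → MvPolynomial σ K) (hc : ∀ k, m.toSyn (m.degree (c k * f k)) ≤ δ)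
    (hsum : m.toSyn (m.degree (∑ k, c k * f k)) < δ) :
    ∃ c' : ι → MvPolynomial σ K, ∑ k, c' k * f k = ∑ k, c k * f k ∧
      ∀ k, m.toSyn (m.degree (c' k * f k)) < δ := by
  classical
  induction hn : #{k | m.toSyn (m.degree (c k * f k)) = δ} using Nat.strong_induction_on
    generalizing c with
  | _ n ih =>
  by_cases htop : ∀ k, m.toSyn (m.degree (c k * f k)) < δ
  · exact ⟨c, rfl, htop⟩
  simp only [not_forall, not_lt] at htop
  obtain ⟨i, hi⟩ := htop
  replace hi := le_antisymm (hc i) hi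
  obtain ⟨j, hji, hj⟩ := exists_ne_toSyn_degree_eq_of_toSyn_degree_sum_lt hc hsum hi
  have hδ : m.degree (c i * f i) ≠ 0 := by
    rintro h0
    rw [h0, map_zero] at hi
    exact not_lt_bot (hi ▸ hsum)
  obtain ⟨c', hsum', hi', hj', hrest⟩ :=
    exists_sum_mul_eq_of_degree_mul_eq hji.symm (hcop hji) (m.toSyn.injective (hi.trans hj.symm)) hδ
  rw [hi] at hi'
  rw [hj] at hj'
  have hc' : ∀ k, m.toSyn (m.degree (c' k * f k)) ≤ δ := by
    intro k
    by_cases hki : k = i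
    · exact hki ▸ hi'.le
    by_cases hkj : k = j
    · exact hkj ▸ hj'
    exact hrest k hki hkj ▸ hc k
  have hcard : #{k | m.toSyn (m.degree (c' k * f k)) = δ} < n := by
    rw [← hn]
    refine card_lt_card ((ssubset_iff_of_subset fun k ↦ ?_).mpr ⟨i, by simpa using hi, ?_⟩)
    · simp only [mem_filter, mem_univ, true_and]
      intro hk
      by_cases hkj : k = j
      · exact hkj ▸ hj
      have hki : k ≠ i := by rintro rfl; exact hi'.ne hk
      rwa [← hrest k hki hkj]
    · simpa using hi'.ne
  obtain ⟨c'', hsum'', hc''⟩ := ih _ hcard c' hc' (hsum' ▸ hsum) rfl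
  exact ⟨c'', hsum''.trans hsum', hc''⟩

theorem exists_degree_le_of_mem_span {f : ι → MvPolynomial σ K}
    (hcop : Pairwise fun i j ↦ m.degree (f i) ⊓ m.degree (f j) = 0) {p : MvPolynomial σ K}
    (hp : p ∈ Ideal.span (Set.range f)) (hp0 : p ≠ 0) : ∃ i, m.degree (f i) ≤ m.degree p := by
  suffices H : ∀ δ : m.syn, ∀ c : ι → MvPolynomial σ K, ∑ k, c k * f k = p →
      (∀ k, m.toSyn (m.degree (c k * f k)) ≤ δ) → ∃ i, m.degree (f i) ≤ m.degree p by
    obtain ⟨c, hc⟩ := Ideal.mem_span_range_iff_exists_fun.mp hp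
    exact H _ c hc fun k ↦ le_sup (f := fun k ↦ m.toSyn (m.degree (c k * f k))) (mem_univ k)
  intro δ
  induction δ using WellFoundedLT.induction with
  | _ δ ih =>
  intro c hcp hc
  rcases (hcp ▸ degree_sum_le.trans (Finset.sup_le fun k _ ↦ hc k)).lt_or_eq with hlt | heq
  · obtain ⟨c', hc'p, hc'⟩ := exists_sum_mul_eq_of_toSyn_degree_sum_lt hcop c hc (hcp ▸ hlt)
    refine ih _ ((Finset.sup_lt_iff (bot_le.trans_lt hlt)).mpr fun k _ ↦ hc' k) c'
      (hc'p.trans hcp) fun k ↦ le_sup (f := fun k ↦ m.toSyn (m.degree (c' k * f k))) (mem_univ k)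
  obtain ⟨i, -, hi⟩ : ∃ i ∈ univ, (c i * f i).coeff (m.degree p) ≠ 0 := by
    apply exists_ne_zero_of_sum_ne_zero
    rw [← coeff_sum, hcp]
    exact coeff_degree_ne_zero_iff.mpr hp0
  have hdeg : m.degree (c i * f i) = m.degree p :=
    m.toSyn.injective (le_antisymm (heq ▸ hc i) (le_degree (mem_support_iff.mpr hi)))
  obtain ⟨hci, hfi⟩ := mul_ne_zero_iff.mp fun h ↦ hi (by rw [h, coeff_zero])
  exact ⟨i, hdeg ▸ degree_mul hci hfi ▸ le_add_self⟩

theorem mem_span_of_mul_mem_span {f : ι → MvPolynomial σ K} (hf : ∀ i, f i ≠ 0)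
    (hcop : Pairwise fun i j ↦ m.degree (f i) ⊓ m.degree (f j) = 0) {b g : MvPolynomial σ K}
    (hb : b ≠ 0) (hbcop : ∀ i, m.degree (f i) ⊓ m.degree b = 0)
    (hbg : b * g ∈ Ideal.span (Set.range f)) : g ∈ Ideal.span (Set.range f) := by
  obtain ⟨q, r, hgr, -, hr⟩ := m.div (b := f) (fun i ↦ isUnit_leadingCoeff.mpr (hf i)) g
  have hq : Finsupp.linearCombination _ f q ∈ Ideal.span (Set.range f) := by
    rw [Ideal.span, ← Finsupp.range_linearCombination]
    exact LinearMap.mem_range_self _ q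
  obtain rfl : r = 0 := by
    by_contra hr0
    have hbr : b * r ∈ Ideal.span (Set.range f) := by
      have : b * r = b * g - b * Finsupp.linearCombination _ f q := by rw [hgr]; ring
      exact this ▸ sub_mem hbg (Ideal.mul_mem_left _ b hq)
    obtain ⟨i, hi⟩ := exists_degree_le_of_mem_span hcop hbr (mul_ne_zero hb hr0)
    rw [degree_mul hb hr0] at hi
    exact hr _ (degree_mem_support hr0) i (Finsupp.le_of_le_add_of_inf_eq_zero (hbcop i) hi)
  rwa [hgr, add_zero]

end MonomialOrder

/-- If `h 1, …, h n` are nonzero polynomials in `R = K[z_1, …, z_N]` whose leading terms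
(with respect to a fixed monomial order) are pairwise coprime, then `h 1, …, h n` is a
regular sequence in `R`. -/
theorem leadingTerms_pairwise_coprime_regular_sequence
    {K : Type*} [Field K] {N n : ℕ} (m : MonomialOrder (Fin N))
    (h : Fin n → MvPolynomial (Fin N) K)
    (hne : ∀ i, h i ≠ 0)
    (hcop : ∀ i j, i ≠ j → IsRelPrime (m.leadingTermOf (h i)) (m.leadingTermOf (h j))) :
    RingTheory.Sequence.IsWeaklyRegular (MvPolynomial (Fin N) K) (List.ofFn h) := by
  simp only [MonomialOrder.leadingTermOf_eq_leadingTerm] at hcop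
  rw [RingTheory.Sequence.isWeaklyRegular_ofFn_iff]
  intro k hk x hx
  refine m.mem_span_of_mul_mem_span (fun i ↦ hne _) (fun i j hij ↦ ?_) (hne _) (fun i ↦ ?_) hx
  · exact MonomialOrder.degree_inf_eq_zero_of_isRelPrime
      (hcop _ _ ((Fin.castLE_injective _).ne hij))
  · exact MonomialOrder.degree_inf_eq_zero_of_isRelPrime (hcop _ _ (Fin.ne_of_lt i.isLt))
end

section
/- Let X be the n×n generic matrix, Y the generic n×1 column over a field K, g_i = Σ_{j=1}^n x_{ij} y_j for 1 ≤ i ≤ n, and Δ = det(X). Then the colon ideal (⟨g_1, ..., g_n⟩ : Δ) equals ⟨y_1, ..., y_n⟩ in R = K[x_{ij}, y_j]. -/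
open MvPolynomial Matrix

/-- With `X` the generic `n×n` matrix, `Y` the generic column, `g i = ∑ j x i j * y j`
and `Δ = det X`, the colon ideal `(⟨g 1, …, g n⟩ : Δ)` equals `⟨y 1, …, y n⟩`. -/
theorem colon_span_g_det_eq_span_y
    {K : Type*} [Field K] (n : ℕ)
    (Xv : Fin n → Fin n → MvPolynomial ((Fin n × Fin n) ⊕ Fin n) K)
    (yv : Fin n → MvPolynomial ((Fin n × Fin n) ⊕ Fin n) K)
    (hX : ∀ i j, Xv i j = MvPolynomial.X (Sum.inl (i, j)))
    (hy : ∀ j, yv j = MvPolynomial.X (Sum.inr j))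
    (g : Fin n → MvPolynomial ((Fin n × Fin n) ⊕ Fin n) K)
    (hg : ∀ i, g i = ∑ j, Xv i j * yv j) :
    (Ideal.span (Set.range g)).colon (Ideal.span {(Matrix.of Xv).det}) =
      Ideal.span (Set.range yv) := by
  have hX' : Xv = fun i j => MvPolynomial.X (Sum.inl (i, j)) := by
    funext i j; exact hX i j
  have hy' : yv = fun j => MvPolynomial.X (Sum.inr j) := by
    funext j; exact hy j
  have hg' : g = fun i => ∑ j, Xv i j * yv j := by
    funext i; exact hg i
  subst hg' hX' hy'
  set A : Matrix (Fin n) (Fin n) (MvPolynomial ((Fin n × Fin n) ⊕ Fin n) K) :=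
    Matrix.of fun i j => MvPolynomial.X (Sum.inl (i, j)) with hA
  set π : MvPolynomial ((Fin n × Fin n) ⊕ Fin n) K →ₐ[K]
      MvPolynomial ((Fin n × Fin n) ⊕ Fin n) K :=
    aeval (Sum.elim (fun p => MvPolynomial.X (Sum.inl p)) (fun _ => 0)) with hπ
  have hπX : ∀ p, π (MvPolynomial.X (Sum.inl p)) = MvPolynomial.X (Sum.inl p) := by
    intro p; rw [hπ, aeval_X, Sum.elim_inl]
  have hπy : ∀ j : Fin n, π (MvPolynomial.X (Sum.inr j)) = 0 := by
    intro j; rw [hπ, aeval_X, Sum.elim_inr]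
  set Y : Ideal (MvPolynomial ((Fin n × Fin n) ⊕ Fin n) K) :=
    Ideal.span (Set.range fun j : Fin n => MvPolynomial.X (Sum.inr j)) with hY
  -- every p is congruent to π p modulo ⟨y⟩
  have hsub : ∀ p, p - π p ∈ Y := by
    intro p
    induction p using MvPolynomial.induction_on with
    | C a => simp
    | add p q hp hq =>
        have := Ideal.add_mem _ hp hq
        simpa [map_add, add_sub_add_comm] using this
    | mul_X p i hp =>
        cases i with
        | inl s =>
            have h2 : p * MvPolynomial.X (Sum.inl s) - π (p * MvPolynomial.X (Sum.inl s)) =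
                (p - π p) * MvPolynomial.X (Sum.inl s) := by
              rw [_root_.map_mul, hπX]; ring
            rw [h2]
            exact Ideal.mul_mem_right _ _ hp
        | inr t =>
            have h2 : p * MvPolynomial.X (Sum.inr t) - π (p * MvPolynomial.X (Sum.inr t)) =
                p * MvPolynomial.X (Sum.inr t) := by
              rw [_root_.map_mul, hπy, mul_zero, sub_zero]
            rw [h2]
            exact Ideal.mul_mem_left _ _ (Ideal.subset_span ⟨t, rfl⟩)
  have hker : ∀ p, p ∈ Y ↔ π p = 0 := by
    intro p
    constructor
    · intro hp
      have hle : Y ≤ RingHom.ker π.toRingHom := by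
        rw [hY, Ideal.span_le]
        rintro _ ⟨j, rfl⟩
        exact hπy j
      exact hle hp
    · intro hp
      have := hsub p
      rwa [hp, sub_zero] at this
  -- π fixes Δ, and Δ ≠ 0
  have hπΔ : π A.det = A.det := by
    rw [π.map_det]
    congr 1
    ext i j
    simp [hA, hπX]
  have hΔne : A.det ≠ 0 := by
    intro h
    have h1 : (MvPolynomial.eval
        (Sum.elim (fun p : Fin n × Fin n => if p.1 = p.2 then (1 : K) else 0)
          (fun _ => 0))) A.det = 1 := by
      have hmd : (MvPolynomial.eval
          (Sum.elim (fun p : Fin n × Fin n => if p.1 = p.2 then (1 : K) else 0)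
            (fun _ => 0))) A.det = (A.map (MvPolynomial.eval
          (Sum.elim (fun p : Fin n × Fin n => if p.1 = p.2 then (1 : K) else 0)
            (fun _ => 0)))).det := RingHom.map_det _ _
      rw [hmd]
      have h2 : A.map (MvPolynomial.eval
          (Sum.elim (fun p : Fin n × Fin n => if p.1 = p.2 then (1 : K) else 0)
            (fun _ => 0))) = 1 := by
        ext i j
        simp [hA, Matrix.one_apply]
      rw [h2, Matrix.det_one]
    rw [h] at h1
    simp at h1
  -- each g i lies in ⟨y⟩
  have hgy : ∀ i : Fin n, (∑ j, MvPolynomial.X (Sum.inl (i, j)) * MvPolynomial.X (Sum.inr j) :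
      MvPolynomial ((Fin n × Fin n) ⊕ Fin n) K) ∈ Y := by
    intro i
    exact Ideal.sum_mem _ fun j _ =>
      Ideal.mul_mem_left _ _ (Ideal.subset_span ⟨j, rfl⟩)
  apply le_antisymm
  · intro r hr
    have hrΔ : r * A.det ∈
        Ideal.span (Set.range fun i : Fin n =>
          ∑ j, MvPolynomial.X (Sum.inl (i, j)) * MvPolynomial.X (Sum.inr j)) := by
      have := Submodule.mem_colon.mp hr A.det (Ideal.subset_span rfl)
      simpa [smul_eq_mul, hA] using this
    have h1 : r * A.det ∈ Y := by
      refine Ideal.span_le.mpr ?_ hrΔ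
      rintro _ ⟨i, rfl⟩
      exact hgy i
    rw [hker, _root_.map_mul, hπΔ] at h1
    rcases mul_eq_zero.mp h1 with h | h
    · exact (hker r).mpr h
    · exact absurd h hΔne
  · rw [Ideal.span_le]
    rintro _ ⟨j, rfl⟩
    rw [SetLike.mem_coe, Ideal.mem_colon_span_singleton]
    -- Cramer: det A • y = adjugate A *ᵥ g
    have hAy : (A *ᵥ fun j => MvPolynomial.X (Sum.inr j)) =
        fun i : Fin n => ∑ j, MvPolynomial.X (Sum.inl (i, j)) * MvPolynomial.X (Sum.inr j) := by
      funext k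
      simp [Matrix.mulVec, dotProduct, hA]
    have key : (A.det • fun j => MvPolynomial.X (Sum.inr j)) =
        A.adjugate *ᵥ fun i : Fin n =>
          ∑ j, MvPolynomial.X (Sum.inl (i, j)) * MvPolynomial.X (Sum.inr j) := by
      rw [← hAy, Matrix.mulVec_mulVec, Matrix.adjugate_mul, Matrix.smul_mulVec,
        Matrix.one_mulVec]
    have h3 : MvPolynomial.X (Sum.inr j) * A.det =
        ∑ k, A.adjugate j k *
          ∑ l, MvPolynomial.X (Sum.inl (k, l)) * MvPolynomial.X (Sum.inr l) := by
      have := congrFun key j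
      simpa [Matrix.mulVec, dotProduct, mul_comm] using this
    rw [show ((Matrix.of fun i j => MvPolynomial.X (Sum.inl (i, j))).det :
        MvPolynomial ((Fin n × Fin n) ⊕ Fin n) K) = A.det from rfl, h3]
    exact Ideal.sum_mem _ fun k _ =>
      Ideal.mul_mem_left _ _ (Ideal.subset_span ⟨k, rfl⟩)
end

section
/- Let X be the n×n generic matrix, Y the generic n×1 column, and g_i = Σ_{j=1}^n x_{ij} y_j for 1 ≤ i ≤ n. Then g_1, ..., g_n form a regular sequence in the polynomial ring R = K[x_{ij}, y_j : 1 ≤ i,j ≤ n]. -/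
/-!
Write `g_t^(m) = ∑_{j<m} x_{tj} y_j` for the entries of `X Y` when `X` has `m` columns, and
induct on `m`. In `g_t^(m+1) = y_m x_{tm} + g_t^(m)` the variable `x_{tm}` occurs in no
`g_s^(m+1)` with `s < t`, so `g_t^(m+1)` is regular modulo these as soon as its coefficient `y_m`
is (compare the coefficients of the top power of `x_{tm}`). That `y_m` is regular modulo
`(g_s^(m+1))_{s<k}` for `k ≤ m` goes by induction on `k`: setting `y_m = 0` turns `g_k^(m+1)` into
`g_k^(m)`, so `g_k^(m+1)` is regular modulo `(g_s^(m+1))_{s<k} + (y_m)`; as `y_m` is regular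
modulo `(g_s^(m+1))_{s<k}`, the two may be swapped, making `y_m` regular modulo
`(g_s^(m+1))_{s≤k}`.
-/

open MvPolynomial

namespace Ideal

variable {A B : Type*} [CommRing A] [CommRing B]

theorem isSMulRegular_quotient_iff {I : Ideal A} {a : A} :
    IsSMulRegular (A ⧸ I) a ↔ ∀ c, a * c ∈ I → c ∈ I :=
  isSMulRegular_quotient_iff_mem_of_smul_mem I a

theorem isSMulRegular_quotient_sup_span_swap {I : Ideal A} {a b : A}
    (ha : IsSMulRegular (A ⧸ I) a) (hb : IsSMulRegular (A ⧸ (I ⊔ span {a})) b) :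
    IsSMulRegular (A ⧸ (I ⊔ span {b})) a := by
  rw [isSMulRegular_quotient_iff] at *
  intro c hc
  obtain ⟨i, hi, _, hd, hcd⟩ := Submodule.mem_sup.mp hc
  obtain ⟨d, rfl⟩ := mem_span_singleton'.mp hd
  have hdmem : d ∈ I ⊔ span {a} := by
    refine hb d ?_
    have : b * d = -i + c * a := by linear_combination hcd
    rw [this]
    exact add_mem (mem_sup_left (neg_mem hi))
      (mem_sup_right (mul_mem_left _ _ (mem_span_singleton_self a)))
  obtain ⟨i', hi', _, he, hde⟩ := Submodule.mem_sup.mp hdmem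
  obtain ⟨e, rfl⟩ := mem_span_singleton'.mp he
  have hce : c - e * b ∈ I := ha _ <| by
    have : a * (c - e * b) = i + b * i' := by linear_combination -hcd - b * hde
    rw [this]
    exact add_mem hi (mul_mem_left _ _ hi')
  have : c = (c - e * b) + e * b := by ring
  rw [this]
  exact add_mem (mem_sup_left hce) (mem_sup_right (mul_mem_left _ _ (mem_span_singleton_self b)))

/-- `ε` plays the role of the substitution `y ↦ 0`. -/
theorem isSMulRegular_quotient_sup_span_of_map {ε : A →+* A} {y : A} (hy : ε y = 0)
    (hε : ∀ c, c - ε c ∈ span {y}) {I : Ideal A} {b : A}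
    (hb : IsSMulRegular (A ⧸ I.map ε) (ε b)) : IsSMulRegular (A ⧸ (I ⊔ span {y})) b := by
  rw [isSMulRegular_quotient_iff] at *
  have hle : I.map ε ≤ I ⊔ span {y} := map_le_iff_le_comap.mpr fun i hi => by
    have : ε i = i - (i - ε i) := by ring
    rw [mem_comap, this]
    exact sub_mem (mem_sup_left hi) (mem_sup_right (hε i))
  intro c hc
  have hεc : ε c ∈ I.map ε := hb _ <| by
    have := mem_map_of_mem ε hc
    rwa [map_mul, map_sup, map_span, Set.image_singleton, hy, span_singleton_eq_bot.mpr rfl,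
      sup_bot_eq] at this
  have : c = ε c + (c - ε c) := by ring
  rw [this]
  exact add_mem (hle hεc) (mem_sup_right (hε c))

theorem isSMulRegular_quotient_of_leftInverse {f : A →+* B} {f' : B →+* A}
    (hf : Function.LeftInverse f' f) {I : Ideal A} {a : A}
    (h : IsSMulRegular (B ⧸ I.map f) (f a)) : IsSMulRegular (A ⧸ I) a := by
  have hmap : (I.map f).map f' = I := by
    rw [map_map, show f'.comp f = RingHom.id A from RingHom.ext hf, map_id]
  rw [isSMulRegular_quotient_iff] at *
  intro c hc
  have := mem_map_of_mem f' (h _ (by simpa using mem_map_of_mem f hc))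
  rwa [hmap, hf] at this

theorem span_image_Iio_succ (f : ℕ → A) (k : ℕ) :
    span (f '' Set.Iio (k + 1)) = span (f '' Set.Iio k) ⊔ span {f k} := by
  rw [show Set.Iio (k + 1) = insert k (Set.Iio k) by ext; simp, Set.image_insert_eq,
    span_insert, sup_comm]

end Ideal

namespace Polynomial

variable {A : Type*} [CommRing A]

theorem isSMulRegular_quotient_map_C_mul_X_add_C {J : Ideal A} {u : A}
    (hu : IsSMulRegular (A ⧸ J) u) (r : A) :
    IsSMulRegular (A[X] ⧸ J.map C) (C u * X + C r) := by
  rw [Ideal.isSMulRegular_quotient_iff] at *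
  intro c hc
  rw [Ideal.mem_map_C_iff] at hc ⊢
  have hcoeff : ∀ k, u * c.coeff k + r * c.coeff (k + 1) ∈ J := fun k => by
    simpa [add_mul, mul_assoc, coeff_C_mul, coeff_X_mul] using hc (k + 1)
  have : ∀ d k, c.natDegree < k + d → c.coeff k ∈ J := by
    intro d
    induction d with
    | zero => intro k hk; simp [coeff_eq_zero_of_natDegree_lt (show c.natDegree < k by omega)]
    | succ d ih =>
      intro k hk
      refine hu _ ?_
      have := J.sub_mem (hcoeff k) (J.mul_mem_left r (ih (k + 1) (by omega)))
      rwa [add_sub_cancel_right] at this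
  exact fun k => this (c.natDegree + 1) k (by omega)

end Polynomial

namespace MvPolynomial

variable {σ S : Type*} [CommRing S]

theorem sub_aeval_update_zero_mem_span_X [DecidableEq σ] (v : σ) (p : MvPolynomial σ S) :
    p - aeval (Function.update X v 0) p ∈ Ideal.span {X v} := by
  rw [← Ideal.Quotient.mk_eq_mk_iff_sub_mem]
  let q := Ideal.Quotient.mkₐ S (Ideal.span {(X v : MvPolynomial σ S)})
  have : q.comp (aeval (Function.update X v 0)) = q := by
    ext w
    by_cases hw : w = v
    · subst hw
      simp [q, Ideal.Quotient.eq_zero_iff_mem.mpr (Ideal.mem_span_singleton_self _)]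
    · simp [q, Function.update_of_ne hw]
  exact (congrArg (· p) this).symm

theorem isSMulRegular_quotient_span_mul_X_add {v : σ} {G : Set (MvPolynomial σ S)}
    (hG : ∀ g ∈ G, v ∉ g.vars) {u r : MvPolynomial σ S} (hu : v ∉ u.vars)
    (hr : v ∉ r.vars)
    (hreg : IsSMulRegular (MvPolynomial σ S ⧸ Ideal.span G) u) :
    IsSMulRegular (MvPolynomial σ S ⧸ Ideal.span G) (u * X v + r) := by
  classical
  set φ : MvPolynomial σ S →+* Polynomial (MvPolynomial σ S) :=
    eval₂Hom (Polynomial.C.comp C) (Function.update (fun w => Polynomial.C (X w)) v Polynomial.X)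
  have hφC : ∀ p, v ∉ p.vars → φ p = Polynomial.C p := fun p hp =>
    hom_congr_vars (by ext; simp [φ])
      (fun w hw _ => by simp [φ, Function.update_of_ne (ne_of_mem_of_not_mem hw hp)]) rfl
  have hφX : φ (X v) = Polynomial.X := by simp [φ]
  have hleft : Function.LeftInverse (Polynomial.evalRingHom (X v)) φ := fun p => by
    change ((Polynomial.evalRingHom (X v)).comp φ) p = RingHom.id _ p
    congr 1
    ext w
    · simp [φ]
    · by_cases hw : w = v
      · subst hw; simp [hφX]
      · simp [φ, Function.update_of_ne hw]
  refine Ideal.isSMulRegular_quotient_of_leftInverse hleft ?_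
  have hmap : (Ideal.span G).map φ = (Ideal.span G).map Polynomial.C := by
    rw [Ideal.map_span, Ideal.map_span]
    exact congrArg _ (Set.image_congr fun g hg => hφC g (hG g hg))
  rw [hmap, map_add, map_mul, hφC u hu, hφC r hr, hφX]
  exact Polynomial.isSMulRegular_quotient_map_C_mul_X_add_C hreg r

end MvPolynomial

theorem RingTheory.Sequence.isWeaklyRegular_ofFn_iff_s5 {A : Type*} [CommRing A] {n : ℕ}
    (f : Fin n → A) :
    IsWeaklyRegular A (List.ofFn f) ↔
      ∀ i, IsSMulRegular (A ⧸ Ideal.span (f '' Set.Iio i)) (f i) := by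
  rw [isWeaklyRegular_iff]
  simp only [List.getElem_ofFn, List.length_ofFn]
  rw [Fin.forall_iff]
  refine forall_congr' fun i => forall_congr' fun hi => ?_
  have hspan : (Ideal.ofList ((List.ofFn f).take i) • ⊤ : Submodule A A)
      = Ideal.span (f '' Set.Iio ⟨i, hi⟩) := by
    rw [Ideal.smul_eq_mul, Ideal.mul_top, Ideal.ofList]
    congr 1
    ext a
    simp only [List.mem_take_iff_getElem, List.getElem_ofFn, List.length_ofFn, Set.mem_ofPred_eq,
      Set.mem_image, lt_min_iff]
    constructor
    · rintro ⟨j, ⟨hj, -⟩, rfl⟩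
      exact ⟨_, hj, rfl⟩
    · rintro ⟨s, hs, rfl⟩
      exact ⟨s, ⟨hs, s.isLt⟩, rfl⟩
  rw [hspan]

namespace GenericMatrixVector

open Ideal (span)

variable (K : Type*) [CommRing K]

/-- Indices range over `ℕ` so that generic matrices of all sizes live in one polynomial ring. -/
abbrev Var := (ℕ × ℕ) ⊕ ℕ

noncomputable def entry (m i : ℕ) : MvPolynomial Var K :=
  ∑ j ∈ Finset.range m, X (.inl (i, j)) * X (.inr j)

variable {K}

theorem entry_succ (m i : ℕ) :
    entry K (m + 1) i = X (.inr m) * X (.inl (i, m)) + entry K m i := by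
  rw [entry, Finset.sum_range_succ, entry, add_comm, mul_comm]

theorem aeval_update_entry_succ (m i : ℕ) :
    aeval (Function.update X (.inr m) 0) (entry K (m + 1) i) = entry K m i := by
  rw [entry_succ, entry, map_add, map_mul, map_sum]
  simp only [aeval_X, Function.update_self, zero_mul, zero_add]
  refine Finset.sum_congr rfl fun j hj => ?_
  have : (Sum.inr j : Var) ≠ .inr m := by simpa using (Finset.mem_range.mp hj).ne
  simp [Function.update_of_ne this]

theorem exists_of_mem_vars_entry [Nontrivial K] {m i : ℕ} {w : Var}
    (hw : w ∈ (entry K m i).vars) :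
    ∃ j < m, w = .inl (i, j) ∨ w = .inr j := by
  classical
  obtain ⟨j, hj, hwj⟩ := Finset.mem_biUnion.mp (vars_sum_subset _ _ hw)
  refine ⟨j, Finset.mem_range.mp hj, ?_⟩
  simpa [vars_X] using vars_mul _ _ hwj

theorem isSMulRegular_X_inr {m : ℕ}
    (hreg : ∀ t < m,
      IsSMulRegular (MvPolynomial Var K ⧸ span (entry K m '' Set.Iio t)) (entry K m t))
    {k : ℕ} (hk : k ≤ m) :
    IsSMulRegular (MvPolynomial Var K ⧸ span (entry K (m + 1) '' Set.Iio k))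
      (X (.inr m) : MvPolynomial Var K) := by
  induction k with
  | zero => simp [Ideal.isSMulRegular_quotient_iff]
  | succ k ih =>
    rw [Ideal.span_image_Iio_succ]
    refine Ideal.isSMulRegular_quotient_sup_span_swap (ih (by omega)) ?_
    set ε : MvPolynomial Var K →+* MvPolynomial Var K :=
      (aeval (Function.update X (.inr m) 0) : MvPolynomial Var K →ₐ[K] _).toRingHom
    have hε : ∀ i, ε (entry K (m + 1) i) = entry K m i := aeval_update_entry_succ m
    refine Ideal.isSMulRegular_quotient_sup_span_of_map (ε := ε) (by simp [ε])
      (sub_aeval_update_zero_mem_span_X _) ?_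
    rw [Ideal.map_span, Set.image_image, funext hε, hε]
    exact hreg k (by omega)

theorem isSMulRegular_entry [Nontrivial K] {m t : ℕ} (ht : t < m) :
    IsSMulRegular (MvPolynomial Var K ⧸ span (entry K m '' Set.Iio t)) (entry K m t) := by
  induction m generalizing t with
  | zero => omega
  | succ m ih =>
    rw [entry_succ]
    refine isSMulRegular_quotient_span_mul_X_add ?_ ?_ ?_
      (isSMulRegular_X_inr (fun t ht => ih ht) (by omega))
    · rintro _ ⟨s, hs, rfl⟩ hv
      obtain ⟨j, -, h | h⟩ := exists_of_mem_vars_entry hv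
      all_goals simp_all
    · simp [vars_X]
    · intro hv
      obtain ⟨j, hj, h | h⟩ := exists_of_mem_vars_entry hv
      all_goals simp_all

def finVar (n : ℕ) : (Fin n × Fin n) ⊕ Fin n → Var :=
  Sum.map (Prod.map Fin.val Fin.val) Fin.val

theorem finVar_injective (n : ℕ) : (finVar n).Injective :=
  (Fin.val_injective.prodMap Fin.val_injective).sumMap Fin.val_injective

theorem rename_finVar_sum {n : ℕ} (i : Fin n) :
    rename (finVar n) (∑ j, X (.inl (i, j)) * X (.inr j) : MvPolynomial _ K) = entry K n i := by
  simp [entry, finVar, Fin.sum_univ_eq_sum_range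
    (fun j => X (.inl ((i : ℕ), j)) * X (.inr j) : ℕ → MvPolynomial Var K)]

theorem isWeaklyRegular_ofFn_of_rename [Nontrivial K] {n : ℕ}
    (f : Fin n → MvPolynomial ((Fin n × Fin n) ⊕ Fin n) K)
    (hf : ∀ i, rename (finVar n) (f i) = entry K n i) :
    RingTheory.Sequence.IsWeaklyRegular (MvPolynomial ((Fin n × Fin n) ⊕ Fin n) K)
      (List.ofFn f) := by
  rw [RingTheory.Sequence.isWeaklyRegular_ofFn_iff_s5]
  intro i
  refine Ideal.isSMulRegular_quotient_of_leftInverse (f := (rename (finVar n)).toRingHom)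
    (f' := (killCompl (finVar_injective n)).toRingHom) (fun p => killCompl_rename_app _ p) ?_
  have key := isSMulRegular_entry (K := K) i.isLt
  rw [← Fin.image_val_Iio, Set.image_image, ← funext hf, ← hf, ← Set.image_image] at key
  rwa [Ideal.map_span]

end GenericMatrixVector

/-- With `X` the generic `n×n` matrix and `Y` the generic column, the entries
`g i = ∑ j x i j * y j` of `X * Y` form a regular sequence in `R = K[x i j, y j]`. -/
theorem generic_XY_entries_regular_sequence
    {K : Type*} [Field K] (n : ℕ)
    (Xv : Fin n → Fin n → MvPolynomial ((Fin n × Fin n) ⊕ Fin n) K)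
    (yv : Fin n → MvPolynomial ((Fin n × Fin n) ⊕ Fin n) K)
    (hX : ∀ i j, Xv i j = MvPolynomial.X (Sum.inl (i, j)))
    (hy : ∀ j, yv j = MvPolynomial.X (Sum.inr j))
    (g : Fin n → MvPolynomial ((Fin n × Fin n) ⊕ Fin n) K)
    (hg : ∀ i, g i = ∑ j, Xv i j * yv j) :
    RingTheory.Sequence.IsWeaklyRegular (MvPolynomial ((Fin n × Fin n) ⊕ Fin n) K)
      (List.ofFn g) :=
  GenericMatrixVector.isWeaklyRegular_ofFn_of_rename g fun i => by
    simp only [hg, hX, hy, GenericMatrixVector.rename_finVar_sum]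
end

section
/- Let X = (x_{ij}) be the n×n generic symmetric matrix (x_{ij} = x_{ji}, indeterminates for i ≤ j) and Y the generic n×1 column. Let g_i = Σ_{j=1}^n x_{min(i,j),max(i,j)} y_j. Then g_1, ..., g_n form a regular sequence in R = K[x_{ij} (i ≤ j), y_j]. -/
/-!
For `S ⊆ {1, …, n}` put `g_i^S = ∑_{j ∈ S} x_{ij} y_j`; we show by induction on `S` that the
`g_i^S`, `i ∈ S`, form a weakly regular sequence in every order. Two eliminations of one
variable do it.

* For `j ∈ S`, view `R = A[y_j]`: then `g_t^S = g_t^{S∖j} + x_{tj} y_j` with both coefficients in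
  `A`. By induction the `g_t^{S∖j}` are regular in `A`, so their syzygies are Koszul syzygies, and
  this makes `y_j` a nonzerodivisor modulo `(g_t^S : t ∈ T)` for every `T`.
* For `i ∉ T`, view `R = B[x_{ii}]`: the `g_t^S`, `t ∈ T`, lie in `B`, while
  `g_i^S = y_i x_{ii} + (element of B)`. A linear polynomial whose leading coefficient is a
  nonzerodivisor modulo an ideal of `B` is a nonzerodivisor modulo its extension, so the previous
  point (for `j = i`) shows that `g_i^S` is a nonzerodivisor modulo `(g_t^S : t ∈ T)`.
-/

section Regular

variable {A : Type*} [CommRing A] {ι : Type*}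

theorem Ideal.isSMulRegular_quotient_iff_s6 {J : Ideal A} {a : A} :
    IsSMulRegular (A ⧸ J) a ↔ ∀ f, a * f ∈ J → f ∈ J :=
  isSMulRegular_quotient_iff_mem_of_smul_mem J a

theorem Ideal.mem_span_image_finset_iff {T : Finset ι} {r : ι → A} {x : A} :
    x ∈ Ideal.span (r '' T) ↔ ∃ c : ι → A, ∑ i ∈ T, c i * r i = x := by
  constructor
  · intro hx
    obtain ⟨l, hl, rfl⟩ := (Finsupp.mem_span_image_iff_linearCombination A).mp hx
    refine ⟨l, ?_⟩
    rw [Finsupp.linearCombination_apply, Finsupp.sum_of_support_subset l hl _ (by simp)]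
    rfl
  · rintro ⟨c, rfl⟩
    exact Ideal.sum_mem _ fun i hi => Ideal.mul_mem_left _ _ (Ideal.subset_span ⟨i, hi, rfl⟩)

theorem RingEquiv.isSMulRegular_quotient_map_iff {B : Type*} [CommRing B] (e : A ≃+* B)
    (J : Ideal A) (a : A) :
    IsSMulRegular (B ⧸ J.map e) (e a) ↔ IsSMulRegular (A ⧸ J) a := by
  simp only [Ideal.isSMulRegular_quotient_iff_s6, e.surjective.forall, ← map_mul,
    Ideal.apply_mem_of_equiv_iff]

def IsRegularInAnyOrder (r : ι → A) (T : Finset ι) : Prop :=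
  ∀ U ⊆ T, ∀ i ∈ T, i ∉ U → IsSMulRegular (A ⧸ Ideal.span (r '' U)) (r i)

theorem IsRegularInAnyOrder.mono {r : ι → A} {T T' : Finset ι} (h : IsRegularInAnyOrder r T)
    (hT : T' ⊆ T) : IsRegularInAnyOrder r T' :=
  fun U hU i hi => h U (hU.trans hT) i (hT hi)

/-- Syzygies of a regular sequence are Koszul syzygies; here they are paired with an arbitrary
`b`, which turns the Koszul relations into the `2 × 2` minors of `(r, b)`. -/
theorem IsRegularInAnyOrder.sum_mul_mem_span_minors [DecidableEq ι] {r : ι → A} {T : Finset ι}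
    (h : IsRegularInAnyOrder r T) (b : ι → A) {c : ι → A} (hc : ∑ i ∈ T, c i * r i = 0) :
    ∑ i ∈ T, c i * b i ∈ Ideal.span (Set.image2 (fun i j => r i * b j - r j * b i) T T) := by
  induction T using Finset.induction_on generalizing c with
  | empty => simp
  | insert a T ha ih =>
    rw [Finset.sum_insert ha] at hc ⊢
    have hca : c a ∈ Ideal.span (r '' T) := by
      refine Ideal.isSMulRegular_quotient_iff_s6.mp
        (h T (Finset.subset_insert a T) a (Finset.mem_insert_self a T) ha) (c a) ?_
      rw [mul_comm, eq_neg_of_add_eq_zero_left hc]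
      exact neg_mem (Ideal.mem_span_image_finset_iff.mpr ⟨c, rfl⟩)
    obtain ⟨d, hd⟩ := Ideal.mem_span_image_finset_iff.mp hca
    have hsyz : ∑ i ∈ T, (c i + d i * r a) * r i = 0 := by
      rw [← hc, ← hd, add_comm, Finset.sum_mul, ← Finset.sum_add_distrib]
      exact Finset.sum_congr rfl fun i _ => by ring
    have key : c a * b a + ∑ i ∈ T, c i * b i
        = ∑ i ∈ T, (c i + d i * r a) * b i + ∑ i ∈ T, d i * (r i * b a - r a * b i) := by
      rw [← hd, Finset.sum_mul, ← Finset.sum_add_distrib, ← Finset.sum_add_distrib]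
      exact Finset.sum_congr rfl fun i _ => by ring
    have hsub : Set.image2 (fun i j => r i * b j - r j * b i) ↑T ↑T
        ⊆ Set.image2 (fun i j => r i * b j - r j * b i) ↑(insert a T) ↑(insert a T) :=
      Set.image2_subset (by simp) (by simp)
    rw [key]
    refine add_mem (Ideal.span_mono hsub (ih (h.mono (Finset.subset_insert a T)) hsyz))
      (Ideal.sum_mem _ fun i hi => Ideal.mul_mem_left _ _ (Ideal.subset_span ?_))
    exact Set.mem_image2_of_mem (Finset.mem_insert_of_mem hi) (Finset.mem_insert_self a T)

theorem IsRegularInAnyOrder.comp_ringEquiv {B : Type*} [CommRing B] {r : ι → A} {T : Finset ι}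
    (h : IsRegularInAnyOrder r T) (e : A ≃+* B) : IsRegularInAnyOrder (e ∘ r) T :=
  fun U hU i hi hiU => by
    rw [Set.image_comp, ← Ideal.map_span]
    exact (e.isSMulRegular_quotient_map_iff _ _).mpr (h U hU i hi hiU)

theorem IsRegularInAnyOrder.isWeaklyRegular_ofFn {k : ℕ} {r : Fin k → A}
    (h : IsRegularInAnyOrder r Finset.univ) :
    RingTheory.Sequence.IsWeaklyRegular A (List.ofFn r) := by
  refine ⟨fun i hi => ?_⟩
  rw [List.length_ofFn] at hi
  have hideal : (Ideal.ofList ((List.ofFn r).take i) • ⊤ : Submodule A A)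
      = Ideal.span (r '' ↑(Finset.Iio (⟨i, hi⟩ : Fin k))) := by
    rw [Ideal.smul_eq_mul, Ideal.mul_top, Ideal.ofList]
    congr 1
    ext x
    simp only [List.mem_take_iff_getElem, List.getElem_ofFn, List.length_ofFn, Finset.coe_Iio,
      Set.mem_image, Set.mem_Iio, Fin.lt_def]
    constructor
    · rintro ⟨m, hm, rfl⟩
      exact ⟨⟨m, by omega⟩, by simp only; omega, rfl⟩
    · rintro ⟨j, hj, rfl⟩
      exact ⟨j, by omega, rfl⟩
  simp only [List.getElem_ofFn]
  rw [hideal]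
  exact h _ (Finset.subset_univ _) _ (Finset.mem_univ _) (by simp)

end Regular

namespace Polynomial

open nonZeroDivisors

variable {A : Type*} [CommRing A] {ι : Type*}

theorem isSMulRegular_of_isSMulRegular_C {I : Ideal A} {u : A}
    (h : IsSMulRegular (A[X] ⧸ I.map C) (C u)) : IsSMulRegular (A ⧸ I) u := by
  rw [Ideal.isSMulRegular_quotient_iff_s6] at h ⊢
  intro f hf
  have hCf : C u * C f ∈ I.map C := by simpa [← map_mul] using Ideal.mem_map_of_mem C hf
  simpa using Ideal.mem_map_C_iff.mp (h (C f) hCf) 0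

theorem isSMulRegular_C_mul_X_add_C {I : Ideal A} {u : A}
    (h : IsSMulRegular (A ⧸ I) u) (w : A) : IsSMulRegular (A[X] ⧸ I.map C) (C u * X + C w) := by
  have hmem : ∀ F : A[X], F ∈ I.map C ↔ F.map (Ideal.Quotient.mk I) = 0 := fun F => by
    simp [Ideal.mem_map_C_iff, Polynomial.ext_iff, Ideal.Quotient.eq_zero_iff_mem]
  have hu : Ideal.Quotient.mk I u ∈ (A ⧸ I)⁰ := by
    rw [mem_nonZeroDivisors_iff_right, Ideal.Quotient.mk_surjective.forall]
    intro f hf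
    rw [← map_mul, Ideal.Quotient.eq_zero_iff_mem, mul_comm] at hf
    exact Ideal.Quotient.eq_zero_iff_mem.mpr (Ideal.isSMulRegular_quotient_iff_s6.mp h f hf)
  have hlin : (C u * X + C w).map (Ideal.Quotient.mk I) ∈ (A ⧸ I)[X]⁰ := by
    rcases subsingleton_or_nontrivial (A ⧸ I) with _ | _
    · exact mem_nonZeroDivisors_iff_right.mpr fun _ _ => Subsingleton.elim _ _
    · apply mem_nonZeroDivisors_of_leadingCoeff
      simpa [leadingCoeff_linear (nonZeroDivisors.ne_zero hu)] using hu
  rw [Ideal.isSMulRegular_quotient_iff_s6]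
  intro F hF
  rw [hmem, Polynomial.map_mul, mul_comm] at hF
  exact (hmem F).mpr (mem_nonZeroDivisors_iff_right.mp hlin _ hF)

theorem _root_.IsRegularInAnyOrder.of_comp_C {a : ι → A} {T : Finset ι}
    (h : IsRegularInAnyOrder (C ∘ a) T) : IsRegularInAnyOrder a T :=
  fun U hU i hi hiU => isSMulRegular_of_isSMulRegular_C <| by
    rw [Ideal.map_span, ← Set.image_comp]
    exact h U hU i hi hiU

theorem isSMulRegular_X_quotient_span {T : Finset ι} (a b : ι → A)
    (hsyz : ∀ c : ι → A, ∑ i ∈ T, c i * a i = 0 →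
      ∑ i ∈ T, c i * b i ∈ Ideal.span (Set.image2 (fun i j => a i * b j - a j * b i) T T)) :
    IsSMulRegular (A[X] ⧸ Ideal.span ((fun i => C (a i) + C (b i) * X) '' T)) (X : A[X]) := by
  set g : ι → A[X] := fun i => C (a i) + C (b i) * X
  rw [Ideal.isSMulRegular_quotient_iff_s6]
  intro f hf
  obtain ⟨q, hq⟩ := Ideal.mem_span_image_finset_iff.mp hf
  set c : ι → A := fun i => (q i).coeff 0
  have hc : ∑ i ∈ T, c i * a i = 0 := by
    simpa [finsetSum_coeff, mul_coeff_zero, g, c] using congrArg (coeff · 0) hq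
  have hterm : ∀ i, q i * g i = X * ((q i).divX * g i + C (c i * b i)) + C (c i * a i) := by
    intro i
    conv_lhs => rw [← X_mul_divX_add (q i)]
    simp only [g, c, map_mul]
    ring
  have hf' : X * f = X * (∑ i ∈ T, (q i).divX * g i + C (∑ i ∈ T, c i * b i)) := by
    rw [← hq, Finset.sum_congr rfl fun i _ => hterm i, Finset.sum_add_distrib, ← map_sum, hc,
      map_zero, add_zero, ← Finset.mul_sum, Finset.sum_add_distrib, map_sum]
  rw [isRegular_X.left hf']
  refine add_mem (Ideal.sum_mem _ fun i hi => Ideal.mul_mem_left _ _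
    (Ideal.subset_span ⟨i, hi, rfl⟩)) ?_
  have hminors := Ideal.mem_map_of_mem C (hsyz c hc)
  rw [Ideal.map_span] at hminors
  refine Ideal.span_le.mpr ?_ hminors
  rintro _ ⟨_, ⟨i, hi, j, hj, rfl⟩, rfl⟩
  have : C (a i * b j - a j * b i) = g i * C (b j) - g j * C (b i) := by
    simp only [g, map_sub, map_mul]
    ring
  rw [this]
  exact sub_mem (Ideal.mul_mem_right _ _ (Ideal.subset_span ⟨i, hi, rfl⟩))
    (Ideal.mul_mem_right _ _ (Ideal.subset_span ⟨j, hj, rfl⟩))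

variable {R : Type*} [CommRing R]

theorem _root_.IsRegularInAnyOrder.isSMulRegular_var [DecidableEq ι] (e : R ≃+* A[X])
    {p q : ι → R} {T : Finset ι} {y : R} (h : IsRegularInAnyOrder p T)
    (hp : ∀ t, e (p t) ∈ Set.range C) (hq : ∀ t, e (q t) ∈ Set.range C) (hy : e y = X) :
    IsSMulRegular (R ⧸ Ideal.span ((fun t => p t + q t * y) '' T)) y := by
  choose a ha using hp
  choose b hb using hq
  have hreg : IsRegularInAnyOrder a T := by
    refine IsRegularInAnyOrder.of_comp_C ?_
    convert h.comp_ringEquiv e using 1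
    exact _root_.funext ha
  have hgen : (fun t => e (p t + q t * y)) = fun t => C (a t) + C (b t) * (X : A[X]) :=
    _root_.funext fun t => by rw [map_add, map_mul, ← ha, ← hb, hy]
  rw [← e.isSMulRegular_quotient_map_iff, Ideal.map_span, Set.image_image, hgen, hy]
  exact isSMulRegular_X_quotient_span a b fun c hc => hreg.sum_mul_mem_span_minors b hc

theorem _root_.IsSMulRegular.mul_var_add (e : R ≃+* A[X]) {s : Set R} {u x w : R}
    (h : IsSMulRegular (R ⧸ Ideal.span s) u) (hs : ∀ f ∈ s, e f ∈ Set.range C)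
    (hu : e u ∈ Set.range C) (hx : e x = X) (hw : e w ∈ Set.range C) :
    IsSMulRegular (R ⧸ Ideal.span s) (u * x + w) := by
  obtain ⟨a, ha⟩ := hu
  obtain ⟨c, hc⟩ := hw
  have hspan : (Ideal.span s).map e = (Ideal.span (C ⁻¹' (e '' s))).map C := by
    rw [Ideal.map_span, Ideal.map_span, Set.image_preimage_eq_of_subset]
    rintro _ ⟨f, hf, rfl⟩
    exact hs f hf
  rw [← e.isSMulRegular_quotient_map_iff, hspan, ← ha] at h
  rw [← e.isSMulRegular_quotient_map_iff, hspan, map_add, map_mul, hx, ← ha, ← hc]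
  exact isSMulRegular_C_mul_X_add_C (isSMulRegular_of_isSMulRegular_C h) c

end Polynomial

open MvPolynomial

namespace MvPolynomial

variable (K : Type*) [CommRing K] {σ : Type*} [DecidableEq σ]

noncomputable def separateVarEquiv (v : σ) :
    MvPolynomial σ K ≃ₐ[K] Polynomial (MvPolynomial {u : σ // u ≠ v} K) :=
  (renameEquiv K (Equiv.optionSubtypeNe v).symm).trans (optionEquivLeft K _)

variable {K}

theorem separateVarEquiv_X_self (v : σ) : separateVarEquiv K v (X v) = Polynomial.X := by
  simp [separateVarEquiv, optionEquivLeft_X_none]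

theorem separateVarEquiv_X_of_ne {u v : σ} (h : u ≠ v) :
    separateVarEquiv K v (X u) = Polynomial.C (X ⟨u, h⟩) := by
  simp [separateVarEquiv, Equiv.optionSubtypeNe_symm_of_ne h, optionEquivLeft_X_some]

theorem separateVarEquiv_mem_range_C {v : σ} {p : MvPolynomial σ K}
    (hp : p ∈ supported K {v}ᶜ) : separateVarEquiv K v p ∈ Set.range Polynomial.C := by
  rw [supported_eq_adjoin_X] at hp
  induction hp using Algebra.adjoin_induction with
  | mem x hx =>
    obtain ⟨u, hu, rfl⟩ := hx
    exact ⟨_, (separateVarEquiv_X_of_ne hu).symm⟩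
  | algebraMap r =>
    exact ⟨algebraMap K _ r, by rw [AlgEquiv.commutes, Polynomial.algebraMap_apply]⟩
  | add x y _ _ hx hy =>
    obtain ⟨a, ha⟩ := hx
    obtain ⟨b, hb⟩ := hy
    exact ⟨a + b, by rw [map_add, map_add, ha, hb]⟩
  | mul x y _ _ hx hy =>
    obtain ⟨a, ha⟩ := hx
    obtain ⟨b, hb⟩ := hy
    exact ⟨a * b, by rw [map_mul, map_mul, ha, hb]⟩

end MvPolynomial

namespace GenericSymmetric

variable {n : ℕ}

abbrev Var (n : ℕ) := {p : Fin n × Fin n // p.1 ≤ p.2} ⊕ Fin n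

def xVar (i j : Fin n) : Var n := Sum.inl ⟨(min i j, max i j), min_le_max⟩

theorem xVar_eq_xVar_self_iff {i j k : Fin n} : xVar i j = xVar k k ↔ i = k ∧ j = k := by
  simp only [xVar, Sum.inl.injEq, Subtype.mk.injEq, Prod.mk.injEq, min_self, max_self]
  grind

variable (K : Type*) [CommRing K]

noncomputable def entry (S : Finset (Fin n)) (i : Fin n) : MvPolynomial (Var n) K :=
  ∑ j ∈ S, X (xVar i j) * X (Sum.inr j)

variable {K}

theorem entry_eq_entry_erase_add {S : Finset (Fin n)} {j : Fin n} (hj : j ∈ S) (i : Fin n) :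
    entry K S i = entry K (S.erase j) i + X (xVar i j) * X (Sum.inr j) :=
  (Finset.sum_erase_add S _ hj).symm

theorem entry_mem_supported {S : Finset (Fin n)} {i : Fin n} {s : Set (Var n)}
    (h : ∀ j ∈ S, xVar i j ∈ s ∧ Sum.inr j ∈ s) : entry K S i ∈ supported K s :=
  Subalgebra.sum_mem _ fun j hj => Subalgebra.mul_mem _
    (Algebra.subset_adjoin ⟨_, (h j hj).1, rfl⟩) (Algebra.subset_adjoin ⟨_, (h j hj).2, rfl⟩)

theorem isSMulRegular_X_inr {S T : Finset (Fin n)} {j : Fin n} (hj : j ∈ S)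
    (hreg : IsRegularInAnyOrder (entry K (S.erase j)) T) :
    IsSMulRegular (MvPolynomial (Var n) K ⧸ Ideal.span (entry K S '' T))
      (X (Sum.inr j) : MvPolynomial (Var n) K) := by
  have hgen : entry K S = fun t => entry K (S.erase j) t + X (xVar t j) * X (Sum.inr j) :=
    funext (entry_eq_entry_erase_add hj)
  rw [hgen]
  refine hreg.isSMulRegular_var (separateVarEquiv K (Sum.inr j)).toRingEquiv
    (fun t => separateVarEquiv_mem_range_C
      (entry_mem_supported fun j' hj' => ⟨Sum.inl_ne_inr, ?_⟩))
    (fun t => separateVarEquiv_mem_range_C (Algebra.subset_adjoin ⟨_, Sum.inl_ne_inr, rfl⟩))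
    (separateVarEquiv_X_self _)
  simpa using (Finset.ne_of_mem_erase hj')

theorem isSMulRegular_entry {S T : Finset (Fin n)} {i : Fin n} (hi : i ∈ S) (hiT : i ∉ T)
    (h : IsSMulRegular (MvPolynomial (Var n) K ⧸ Ideal.span (entry K S '' T))
      (X (Sum.inr i) : MvPolynomial (Var n) K)) :
    IsSMulRegular (MvPolynomial (Var n) K ⧸ Ideal.span (entry K S '' T)) (entry K S i) := by
  rw [entry_eq_entry_erase_add hi, add_comm, mul_comm]
  refine h.mul_var_add (separateVarEquiv K (xVar i i)).toRingEquiv ?_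
    (separateVarEquiv_mem_range_C (Algebra.subset_adjoin ⟨_, Sum.inr_ne_inl, rfl⟩))
    (separateVarEquiv_X_self _)
    (separateVarEquiv_mem_range_C (entry_mem_supported fun j hj =>
      ⟨fun h => Finset.ne_of_mem_erase hj (xVar_eq_xVar_self_iff.mp h).2, Sum.inr_ne_inl⟩))
  rintro _ ⟨t, ht, rfl⟩
  exact separateVarEquiv_mem_range_C (entry_mem_supported fun j _ =>
    ⟨fun h => hiT ((xVar_eq_xVar_self_iff.mp h).1 ▸ ht), Sum.inr_ne_inl⟩)

theorem isRegularInAnyOrder_entry (S : Finset (Fin n)) : IsRegularInAnyOrder (entry K S) S := by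
  induction S using Finset.strongInduction with
  | H S ih =>
    intro T hT i hi hiT
    refine isSMulRegular_entry hi hiT (isSMulRegular_X_inr hi ?_)
    exact (ih _ (Finset.erase_ssubset hi)).mono (Finset.subset_erase.mpr ⟨hT, hiT⟩)

end GenericSymmetric

/-- With `X` the generic symmetric `n×n` matrix (indeterminates `x i j` for `i ≤ j`) and
`Y` the generic column, the entries `g i = ∑ j x (min i j) (max i j) * y j` of `X * Y`
form a regular sequence in `R = K[x i j (i ≤ j), y j]`. -/
theorem generic_symmetric_XY_entries_regular_sequence
    {K : Type*} [Field K] (n : ℕ)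
    (xv : (p : Fin n × Fin n) → p.1 ≤ p.2 →
      MvPolynomial ({p : Fin n × Fin n // p.1 ≤ p.2} ⊕ Fin n) K)
    (yv : Fin n → MvPolynomial ({p : Fin n × Fin n // p.1 ≤ p.2} ⊕ Fin n) K)
    (hx : ∀ p hp, xv p hp = MvPolynomial.X (Sum.inl ⟨p, hp⟩))
    (hy : ∀ j, yv j = MvPolynomial.X (Sum.inr j))
    (g : Fin n → MvPolynomial ({p : Fin n × Fin n // p.1 ≤ p.2} ⊕ Fin n) K)
    (hg : ∀ i, g i = ∑ j, xv (min i j, max i j) min_le_max * yv j) :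
    RingTheory.Sequence.IsWeaklyRegular
      (MvPolynomial ({p : Fin n × Fin n // p.1 ≤ p.2} ⊕ Fin n) K) (List.ofFn g) := by
  have hg' : g = GenericSymmetric.entry K Finset.univ := funext fun i => by
    simp [hg, hx, hy, GenericSymmetric.entry, GenericSymmetric.xVar]
  rw [hg']
  exact (GenericSymmetric.isRegularInAnyOrder_entry Finset.univ).isWeaklyRegular_ofFn
end

section
/- Let X̂ be the (n+1)×n generic matrix, Y the generic n×1 column over a field K, and g_i = Σ_{j=1}^n x_{ij} y_j for 1 ≤ i ≤ n+1. Let Δ = det of the top n×n submatrix X of X̂. Then ⟨g_1, ..., g_n, Δ⟩ ⊆ (⟨g_1, ..., g_n⟩ : g_{n+1}) in R̂ = K[x_{ij} (1 ≤ i ≤ n+1, 1 ≤ j ≤ n), y_j]. -/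
open MvPolynomial Matrix

/-- With `X̂` the generic `(n+1)×n` matrix, `Y` the generic column, `g i` the entries
of `X̂ * Y`, and `Δ` the determinant of the top `n×n` submatrix `X`, one has
`⟨g 1, …, g n, Δ⟩ ⊆ (⟨g 1, …, g n⟩ : g (n+1))`. -/
theorem span_g_det_le_colon_g_last
    {K : Type*} [Field K] (n : ℕ)
    (Xv : Fin (n + 1) → Fin n → MvPolynomial ((Fin (n + 1) × Fin n) ⊕ Fin n) K)
    (yv : Fin n → MvPolynomial ((Fin (n + 1) × Fin n) ⊕ Fin n) K)
    (hX : ∀ i j, Xv i j = MvPolynomial.X (Sum.inl (i, j)))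
    (hy : ∀ j, yv j = MvPolynomial.X (Sum.inr j))
    (g : Fin (n + 1) → MvPolynomial ((Fin (n + 1) × Fin n) ⊕ Fin n) K)
    (hg : ∀ i, g i = ∑ j, Xv i j * yv j) :
    Ideal.span (insert (Matrix.of fun i j : Fin n => Xv i.castSucc j).det
        (Set.range fun i : Fin n => g i.castSucc)) ≤
      (Ideal.span (Set.range fun i : Fin n => g i.castSucc)).colon
        (Ideal.span {g (Fin.last n)}) := by
  set I := Ideal.span (Set.range fun i : Fin n => g i.castSucc) with hI
  set M : Matrix (Fin n) (Fin n) _ := Matrix.of fun i j : Fin n => Xv i.castSucc j with hM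
  have hMv : M *ᵥ yv = fun i => g i.castSucc := by
    funext i
    simp [Matrix.mulVec, dotProduct, hg, hM]
  have key : ∀ j, M.det * yv j = ∑ i, M.adjugate j i * g i.castSucc := by
    have h1 : M.adjugate *ᵥ (M *ᵥ yv) = M.det • yv := by
      rw [Matrix.mulVec_mulVec, Matrix.adjugate_mul, Matrix.smul_mulVec,
        Matrix.one_mulVec]
    intro j
    have := congrFun h1 j
    rw [hMv] at this
    simpa [Matrix.mulVec, dotProduct] using this.symm
  rw [Ideal.span_insert]
  apply sup_le
  · rw [Ideal.span_le, Set.singleton_subset_iff]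
    rw [SetLike.mem_coe, Ideal.mem_colon_span_singleton]
    have : M.det * g (Fin.last n) = ∑ j, Xv (Fin.last n) j *
        (∑ i, M.adjugate j i * g i.castSucc) := by
      rw [hg, Finset.mul_sum]
      refine Finset.sum_congr rfl fun j _ => ?_
      rw [← mul_assoc, mul_comm M.det, mul_assoc, key j, Finset.mul_sum]
    rw [show ((Matrix.of fun i j : Fin n => Xv i.castSucc j).det * g (Fin.last n))
        = M.det * g (Fin.last n) from rfl, this]
    refine Ideal.sum_mem _ fun j _ => ?_
    rw [Finset.mul_sum]
    refine Ideal.sum_mem _ fun i _ => ?_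
    rw [← mul_assoc]
    exact Ideal.mul_mem_left _ _ (Ideal.subset_span ⟨i, rfl⟩)
  · intro x hx
    rw [Ideal.mem_colon_span_singleton]
    exact Ideal.mul_mem_right _ _ hx
end
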